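/- arXiv:math/0412125 — 4 statements merged into one kernel-verified Lean document; each statement's English description precedes it below -/
import Mathlib

section
/- Let f : ℍ → ℍ be C¹ on a neighborhood of a point p = t + r·ι(α,β) with r > 0 and sin β ≠ 0, and define g(t,r,α,β) = f(t + r·ι(α,β)). Then ∂g/∂t + ι(α,β)·∂g/∂r − r⁻¹·ι_α⁻¹·∂g/∂α − r⁻¹·ι_β⁻¹·∂g/∂β = ∂f/∂t + i·∂f/∂x + j·∂f/∂y + k·∂f/∂z evaluated at p; that is, the spherical-coordinate form of the operator coincides exactly with the left Fueter operator. -/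
open Quaternion

noncomputable section

/-- The quaternionic imaginary units. -/
def qI : ℍ[ℝ] := ⟨0, 1, 0, 0⟩
def qJ : ℍ[ℝ] := ⟨0, 0, 1, 0⟩
def qK : ℍ[ℝ] := ⟨0, 0, 0, 1⟩

/-- `ι(p) = Im p / |Im p|`. -/
def iota (p : ℍ[ℝ]) : ℍ[ℝ] := (‖p.im‖)⁻¹ • p.im

/-- The left Fueter operator `∂f/∂_l p̄`. -/
def fueterL (f : ℍ[ℝ] → ℍ[ℝ]) (p : ℍ[ℝ]) : ℍ[ℝ] :=
  fderiv ℝ f p 1 + qI * fderiv ℝ f p qI + qJ * fderiv ℝ f p qJ + qK * fderiv ℝ f p qK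

/-- The right Fueter operator `∂f/∂_r p̄`. -/
def fueterR (f : ℍ[ℝ] → ℍ[ℝ]) (p : ℍ[ℝ]) : ℍ[ℝ] :=
  fderiv ℝ f p 1 + fderiv ℝ f p qI * qI + fderiv ℝ f p qJ * qJ + fderiv ℝ f p qK * qK

/-- Spherical parametrization of the imaginary unit sphere. -/
def sph (α β : ℝ) : ℍ[ℝ] :=
  ⟨0, Real.cos α * Real.sin β, Real.sin α * Real.sin β, Real.cos β⟩

/-- `∂ι/∂α`. -/
def sphA (α β : ℝ) : ℍ[ℝ] :=
  ⟨0, -(Real.sin α * Real.sin β), Real.cos α * Real.sin β, 0⟩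

/-- `∂ι/∂β`. -/
def sphB (α β : ℝ) : ℍ[ℝ] :=
  ⟨0, Real.cos α * Real.cos β, Real.sin α * Real.cos β, -Real.sin β⟩

/-- Complex Extrinsic on ω. -/
def IsCE (f : ℍ[ℝ] → ℍ[ℝ]) (ω : Set ℍ[ℝ]) : Prop := ∀ p ∈ ω, f p * p = p * f p

/-- Class I : C¹, CE and `∂f/∂t + ι ∂f/∂r = 0`. -/
def IsClassI (f : ℍ[ℝ] → ℍ[ℝ]) (ω : Set ℍ[ℝ]) : Prop :=
  ContDiffOn ℝ 1 f ω ∧ IsCE f ω ∧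
  ∀ p ∈ ω, fderiv ℝ f p 1 + iota p * fderiv ℝ f p (iota p) = 0

/-- Class II with an explicit decomposition `f = u + ι v`. -/
def IsClassIIWith (f : ℍ[ℝ] → ℍ[ℝ]) (u v : ℍ[ℝ] → ℝ) (ω : Set ℍ[ℝ]) : Prop :=
  ContDiffOn ℝ 1 f ω ∧
  (∀ p ∈ ω, f p = (u p : ℍ[ℝ]) + (v p : ℍ[ℝ]) * iota p) ∧
  ∀ p ∈ ω, fueterL f p = ((-2 * v p / ‖p.im‖ : ℝ) : ℍ[ℝ])

/-- (left-) Class II. -/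
def IsClassII (f : ℍ[ℝ] → ℍ[ℝ]) (ω : Set ℍ[ℝ]) : Prop := ∃ u v, IsClassIIWith f u v ω

/-- right-Class II with an explicit decomposition. -/
def IsClassIIRWith (f : ℍ[ℝ] → ℍ[ℝ]) (u v : ℍ[ℝ] → ℝ) (ω : Set ℍ[ℝ]) : Prop :=
  ContDiffOn ℝ 1 f ω ∧
  (∀ p ∈ ω, f p = (u p : ℍ[ℝ]) + (v p : ℍ[ℝ]) * iota p) ∧
  ∀ p ∈ ω, fueterR f p = ((-2 * v p / ‖p.im‖ : ℝ) : ℍ[ℝ])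

/-- right-Class II. -/
def IsClassIIR (f : ℍ[ℝ] → ℍ[ℝ]) (ω : Set ℍ[ℝ]) : Prop := ∃ u v, IsClassIIRWith f u v ω

/-- Complex Intrinsic : `u`, `v` depend only on `(t, r)`. -/
def IsCI (f : ℍ[ℝ] → ℍ[ℝ]) (ω : Set ℍ[ℝ]) : Prop :=
  ∃ ut vt : ℝ → ℝ → ℝ, ∀ p ∈ ω,
    f p = (ut p.re ‖p.im‖ : ℍ[ℝ]) + (vt p.re ‖p.im‖ : ℍ[ℝ]) * iota p

/-- Class III : Class I and CI. -/
def IsClassIII (f : ℍ[ℝ] → ℍ[ℝ]) (ω : Set ℍ[ℝ]) : Prop := IsClassI f ω ∧ IsCI f ω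

/-! The chain rule turns the four partial derivatives of `g` into `L = df(p)` applied to `1`, `ι`,
`r ι_α` and `r ι_β`. Since `ι_α = sin β • e` with `e` a unit imaginary quaternion, `ι_β` is a
unit imaginary quaternion too, and `u⁻¹ = -u` for such `u`, the spherical expression becomes
`L 1 + ι L ι + e L e + ι_β L ι_β`. Now `(ι, e, ι_β)` is an orthonormal frame of `Im ℍ`, and
`∑ u L u` over an orthonormal frame does not depend on the frame, which gives the Fueter operator. -/

open Real

lemma Quaternion.inv_eq_neg_of_re_eq_zero_of_normSq_eq_one {R : Type*} [Field R] [LinearOrder R]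
    [IsStrictOrderedRing R] {u : ℍ[R]} (hre : u.re = 0) (hu : Quaternion.normSq u = 1) :
    u⁻¹ = -u := by
  rw [Quaternion.inv_def, hu, inv_one, one_smul, Quaternion.star_eq_neg.2 hre]

lemma Quaternion.hasDerivAt_coe (t : ℝ) : HasDerivAt (fun s : ℝ => (s : ℍ[ℝ])) 1 t := by
  simpa [← Quaternion.algebraMap_def, Algebra.algebraMap_eq_smul_one'] using
    (hasDerivAt_id t).smul_const (1 : ℍ[ℝ])

lemma deriv_comp_eq_fderiv_apply {𝕜 E F : Type*} [NontriviallyNormedField 𝕜]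
    [NormedAddCommGroup E] [NormedSpace 𝕜 E] [NormedAddCommGroup F] [NormedSpace 𝕜 F]
    {f : E → F} {c : 𝕜 → E} {v : E} {x : 𝕜}
    (hc : HasDerivAt c v x) (hf : DifferentiableAt 𝕜 f (c x)) :
    deriv (fun s => f (c s)) x = fderiv 𝕜 f (c x) v :=
  (hf.hasFDerivAt.comp_hasDerivAt x hc).deriv

lemma sph_eq (α β : ℝ) :
    sph α β = (cos α * sin β) • qI + (sin α * sin β) • qJ + cos β • qK := by
  ext <;> simp [Quaternion.re_smul] <;> simp [sph, qI, qJ, qK]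

lemma sphB_eq (α β : ℝ) :
    sphB α β = (cos α * cos β) • qI + (sin α * cos β) • qJ + (-sin β) • qK := by
  ext <;> simp [Quaternion.re_smul] <;> simp [sphB, qI, qJ, qK]

lemma hasDerivAt_sph_left (α β : ℝ) : HasDerivAt (fun s => sph s β) (sphA α β) α := by
  simp_rw [sph_eq]
  refine ((((hasDerivAt_cos α).mul_const (sin β)).smul_const qI).add
    (((hasDerivAt_sin α).mul_const (sin β)).smul_const qJ)).add_const (cos β • qK)
    |>.congr_deriv ?_
  ext <;> simp [Quaternion.re_smul] <;> simp [sphA, qI, qJ]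

lemma hasDerivAt_sph_right (α β : ℝ) : HasDerivAt (fun s => sph α s) (sphB α β) β := by
  simp_rw [sph_eq]
  refine ((((hasDerivAt_sin β).const_mul (cos α)).smul_const qI).add
    (((hasDerivAt_sin β).const_mul (sin α)).smul_const qJ)).add
    ((hasDerivAt_cos β).smul_const qK) |>.congr_deriv ?_
  ext <;> simp [Quaternion.re_smul] <;> simp [sphB, qI, qJ, qK]

/-- `ι_α / sin β`, the unit tangent vector of the sphere along the parallel. -/
def sphAUnit (α : ℝ) : ℍ[ℝ] := ⟨0, -sin α, cos α, 0⟩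

lemma sphAUnit_eq (α : ℝ) : sphAUnit α = (-sin α) • qI + cos α • qJ := by
  ext <;> simp [Quaternion.re_smul] <;> simp [sphAUnit, qI, qJ]

lemma sphA_eq_smul_sphAUnit (α β : ℝ) : sphA α β = sin β • sphAUnit α := by
  ext <;> simp [Quaternion.re_smul] <;> simp [sphA, sphAUnit, mul_comm]

lemma sphAUnit_inv (α : ℝ) : (sphAUnit α)⁻¹ = -sphAUnit α :=
  Quaternion.inv_eq_neg_of_re_eq_zero_of_normSq_eq_one rfl <| by
    rw [Quaternion.normSq_def']
    simp [sphAUnit]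

lemma sphB_inv (α β : ℝ) : (sphB α β)⁻¹ = -sphB α β :=
  Quaternion.inv_eq_neg_of_re_eq_zero_of_normSq_eq_one rfl <| by
    rw [Quaternion.normSq_def']
    simp only [sphB]
    linear_combination cos β ^ 2 * sin_sq_add_cos_sq α + sin_sq_add_cos_sq β

section LinearMap

variable {F : Type*} [FunLike F ℍ[ℝ] ℍ[ℝ]] [LinearMapClass F ℝ ℍ[ℝ] ℍ[ℝ]] (L : F)

lemma sphA_inv_mul_apply {α β : ℝ} (hβ : sin β ≠ 0) :
    (sphA α β)⁻¹ * L (sphA α β) = -(sphAUnit α * L (sphAUnit α)) := by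
  rw [sphA_eq_smul_sphAUnit, smul_inv₀, sphAUnit_inv, map_smul, smul_mul_smul_comm,
    inv_mul_cancel₀ hβ, one_smul, neg_mul]

lemma spherical_frame_sum (α β : ℝ) :
    sph α β * L (sph α β) + sphAUnit α * L (sphAUnit α) + sphB α β * L (sphB α β)
      = qI * L qI + qJ * L qJ + qK * L qK := by
  simp only [sph_eq, sphAUnit_eq, sphB_eq, map_add, map_smul, add_mul, mul_add, smul_mul_assoc,
    mul_smul_comm, smul_smul, smul_add]
  linear_combination (norm := module)
    (cos α ^ 2 * sin_sq_add_cos_sq β + sin_sq_add_cos_sq α) • (qI * L qI)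
    + (cos α * sin α * sin_sq_add_cos_sq β) • (qI * L qJ + qJ * L qI)
    + (sin α ^ 2 * sin_sq_add_cos_sq β + sin_sq_add_cos_sq α) • (qJ * L qJ)
    + sin_sq_add_cos_sq β • (qK * L qK)

end LinearMap

/-- the spherical form of the Fueter operator coincides with it. -/
theorem stmt2 (f : ℍ[ℝ] → ℍ[ℝ]) (t r α β : ℝ) (hr : 0 < r) (hβ : Real.sin β ≠ 0)
    (hf : ContDiffAt ℝ 1 f ((t : ℍ[ℝ]) + r • sph α β)) :
    deriv (fun s : ℝ => f ((s : ℍ[ℝ]) + r • sph α β)) t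
      + sph α β * deriv (fun s : ℝ => f ((t : ℍ[ℝ]) + s • sph α β)) r
      - r⁻¹ • ((sphA α β)⁻¹ * deriv (fun s : ℝ => f ((t : ℍ[ℝ]) + r • sph s β)) α)
      - r⁻¹ • ((sphB α β)⁻¹ * deriv (fun s : ℝ => f ((t : ℍ[ℝ]) + r • sph α s)) β)
    = fueterL f ((t : ℍ[ℝ]) + r • sph α β) := by
  have hdf := hf.differentiableAt one_ne_zero
  rw [deriv_comp_eq_fderiv_apply ((Quaternion.hasDerivAt_coe t).add_const _) hdf,
    deriv_comp_eq_fderiv_apply (((hasDerivAt_id' r).smul_const (sph α β)).const_add _) hdf,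
    deriv_comp_eq_fderiv_apply (((hasDerivAt_sph_left α β).fun_const_smul r).const_add _) hdf,
    deriv_comp_eq_fderiv_apply (((hasDerivAt_sph_right α β).fun_const_smul r).const_add _) hdf,
    fueterL]
  set L := fderiv ℝ f ((t : ℍ[ℝ]) + r • sph α β)
  simp only [one_smul, map_smul, mul_smul_comm, smul_smul, inv_mul_cancel₀ hr.ne', sphB_inv,
    neg_mul, sphA_inv_mul_apply L hβ]
  convert congrArg (L 1 + ·) (spherical_frame_sum L α β) using 1 <;> abel

end
end

section
/- Let f and g both be of Class I on an open set ω ⊆ ℍ with ω ∩ ℝ = ∅. Then f(p)g(p) = g(p)f(p) for all p ∈ ω, the product fg and the sum f + g are of Class I on ω, and if f(p) ≠ 0 for all p ∈ ω then the pointwise quaternionic inverse p ↦ f(p)⁻¹ is of Class I on ω. -/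
open Quaternion

noncomputable section

/-!
A Class I function commutes with `p`, hence its value at `p` lies in the centralizer of `p`,
which for non-real `p` is the commutative algebra `ℝ + ℝ p`; so the values of two Class I
functions commute. They also commute with `ι(p)`, and this is what lets `ι(p)` move past `f(p)`
in the Leibniz rule `d(fg) = f dg + df g` and past `f(p)⁻¹` in `d(f⁻¹) = -f⁻¹ df f⁻¹`, so
`∂/∂t + ι ∂/∂r` annihilates `fg` and `f⁻¹` as soon as it annihilates `f` and `g`.
-/

namespace Quaternion

theorem commute_im_of_commute {a p : ℍ[ℝ]} (h : Commute a p) : Commute a.im p.im := by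
  rw [← a.sub_re_self, ← p.sub_re_self]
  exact (h.sub_right (coe_commute _ _).symm).sub_left
    ((coe_commute _ _).sub_right (coe_commute _ _).symm)

theorem im_eq_smul_im_of_commute {a p : ℍ[ℝ]} (hp : p.im ≠ 0) (h : Commute a p) :
    ∃ s : ℝ, a.im = s • p.im := by
  set x := a.im
  set q := p.im
  -- `x q` is real because `star (x q) = q x = x q`.
  obtain ⟨r, hr⟩ : ∃ r : ℝ, x * q = r := by
    refine ⟨(x * q).re, star_eq_self.1 ?_⟩
    rw [star_mul, star_im, star_im, neg_mul_neg]
    exact (commute_im_of_commute h).eq.symm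
  refine ⟨-(r / normSq q), ?_⟩
  calc x = x * q * q⁻¹ := (mul_inv_cancel_right₀ hp x).symm
    _ = _ := by
      rw [hr, inv_def, star_im, coe_mul_eq_smul, smul_smul, smul_neg, ← neg_smul, div_eq_mul_inv]

theorem commute_of_commute_of_im_ne_zero {a b p : ℍ[ℝ]} (hp : p.im ≠ 0) (ha : Commute a p)
    (hb : Commute b p) : Commute a b := by
  obtain ⟨s, hs⟩ := im_eq_smul_im_of_commute hp ha
  obtain ⟨t, ht⟩ := im_eq_smul_im_of_commute hp hb
  rw [← a.re_add_im, ← b.re_add_im, hs, ht]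
  exact (coe_commute _ _).add_left
    ((coe_commute _ _).symm.add_right (((Commute.refl p.im).smul_right t).smul_left s))

end Quaternion

theorem commute_iota_of_commute {a p : ℍ[ℝ]} (h : Commute a p) : Commute a (iota p) := by
  rw [iota, ← p.sub_re_self]
  exact (h.sub_right (coe_commute _ _).symm).smul_right _

section CauchyRiemann

variable {𝕜 E 𝔸 : Type*} [NontriviallyNormedField 𝕜] [NormedAddCommGroup E] [NormedSpace 𝕜 E]

theorem leibniz_apply_add_mul_apply_eq_zero [NormedRing 𝔸] [NormedAlgebra 𝕜 𝔸]
    {A B : E →L[𝕜] 𝔸} {a b i : 𝔸} {v w : E} (hai : Commute a i)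
    (hA : A v + i * A w = 0) (hB : B v + i * B w = 0) :
    (a • B + A.smulRight b) v + i * (a • B + A.smulRight b) w = 0 := by
  have : (a • B + A.smulRight b) v + i * (a • B + A.smulRight b) w
      = a * (B v + i * B w) + (A v + i * A w) * b := by
    simp only [add_apply, smul_apply, ContinuousLinearMap.smulRight_apply,
      smul_eq_mul, mul_add, add_mul, ← mul_assoc, hai.eq]
    abel
  rw [this, hA, hB, mul_zero, zero_mul, add_zero]

theorem neg_mulLeftRight_comp_apply_add_mul_apply_eq_zero [NormedDivisionRing 𝔸]
    [NormedAlgebra 𝕜 𝔸] {A : E →L[𝕜] 𝔸} {a i : 𝔸} {v w : E} (hai : Commute a i)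
    (hA : A v + i * A w = 0) :
    (-(ContinuousLinearMap.mulLeftRight 𝕜 𝔸 a⁻¹ a⁻¹)).comp A v
      + i * (-(ContinuousLinearMap.mulLeftRight 𝕜 𝔸 a⁻¹ a⁻¹)).comp A w = 0 := by
  have : (-(ContinuousLinearMap.mulLeftRight 𝕜 𝔸 a⁻¹ a⁻¹)).comp A v
      + i * (-(ContinuousLinearMap.mulLeftRight 𝕜 𝔸 a⁻¹ a⁻¹)).comp A w
      = -(a⁻¹ * (A v + i * A w) * a⁻¹) := by
    simp only [ContinuousLinearMap.comp_apply, neg_apply,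
      ContinuousLinearMap.mulLeftRight_apply, mul_add, add_mul, ← mul_assoc, hai.inv_left₀.eq]
    noncomm_ring
  rw [this, hA, mul_zero, zero_mul, neg_zero]

end CauchyRiemann

namespace IsCE

variable {f g : ℍ[ℝ] → ℍ[ℝ]} {ω : Set ℍ[ℝ]}

theorem add (hf : IsCE f ω) (hg : IsCE g ω) : IsCE (fun p => f p + g p) ω := fun p hp =>
  (Commute.add_left (hf p hp) (hg p hp) :)

theorem mul (hf : IsCE f ω) (hg : IsCE g ω) : IsCE (fun p => f p * g p) ω := fun p hp =>
  (Commute.mul_left (hf p hp) (hg p hp) :)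

theorem inv (hf : IsCE f ω) : IsCE (fun p => (f p)⁻¹) ω := fun p hp =>
  (Commute.inv_left₀ (hf p hp) :)

end IsCE

theorem contDiffAt_inv' {𝕜 R : Type*} [NontriviallyNormedField 𝕜] [NormedDivisionRing R]
    [NormedAlgebra 𝕜 R] [CompleteSpace R] {n : WithTop ℕ∞} {x : R} (hx : x ≠ 0) :
    ContDiffAt 𝕜 n Inv.inv x := by
  simpa only [Ring.inverse_eq_inv', Units.val_mk0] using contDiffAt_ringInverse 𝕜 (Units.mk0 x hx)

namespace IsClassI

variable {f g : ℍ[ℝ] → ℍ[ℝ]} {ω : Set ℍ[ℝ]}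

theorem differentiableAt (hω : IsOpen ω) (hf : IsClassI f ω) {p : ℍ[ℝ]} (hp : p ∈ ω) :
    DifferentiableAt ℝ f p :=
  (hf.1.contDiffAt (hω.mem_nhds hp)).differentiableAt one_ne_zero

theorem add (hω : IsOpen ω) (hf : IsClassI f ω) (hg : IsClassI g ω) :
    IsClassI (fun p => f p + g p) ω := by
  refine ⟨hf.1.add hg.1, hf.2.1.add hg.2.1, fun p hp => ?_⟩
  rw [fderiv_fun_add (hf.differentiableAt hω hp) (hg.differentiableAt hω hp)]
  simp only [add_apply, mul_add]
  rw [add_add_add_comm, hf.2.2 p hp, hg.2.2 p hp, add_zero]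

theorem mul (hω : IsOpen ω) (hf : IsClassI f ω) (hg : IsClassI g ω) :
    IsClassI (fun p => f p * g p) ω := by
  refine ⟨hf.1.mul hg.1, hf.2.1.mul hg.2.1, fun p hp => ?_⟩
  rw [fderiv_fun_mul' (hf.differentiableAt hω hp) (hg.differentiableAt hω hp)]
  exact leibniz_apply_add_mul_apply_eq_zero (commute_iota_of_commute (hf.2.1 p hp))
    (hf.2.2 p hp) (hg.2.2 p hp)

theorem inv (hω : IsOpen ω) (hf : IsClassI f ω) (hf0 : ∀ p ∈ ω, f p ≠ 0) :
    IsClassI (fun p => (f p)⁻¹) ω := by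
  refine ⟨fun p hp => ?_, hf.2.1.inv, fun p hp => ?_⟩
  · exact ((contDiffAt_inv' (hf0 p hp)).comp p
      (hf.1.contDiffAt (hω.mem_nhds hp))).contDiffWithinAt
  · rw [show (fun p => (f p)⁻¹) = Inv.inv ∘ f from rfl,
      ((hasFDerivAt_inv' (hf0 p hp)).comp p (hf.differentiableAt hω hp).hasFDerivAt).fderiv]
    exact neg_mulLeftRight_comp_apply_add_mul_apply_eq_zero
      (commute_iota_of_commute (hf.2.1 p hp)) (hf.2.2 p hp)

end IsClassI

/-- Class I functions commute and are closed under product, sum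
and pointwise inverse. -/
theorem stmt3 (ω : Set ℍ[ℝ]) (hω : IsOpen ω) (hIm : ∀ p ∈ ω, p.im ≠ 0)
    (f g : ℍ[ℝ] → ℍ[ℝ]) (hf : IsClassI f ω) (hg : IsClassI g ω) :
    (∀ p ∈ ω, f p * g p = g p * f p) ∧
    IsClassI (fun p => f p * g p) ω ∧
    IsClassI (fun p => f p + g p) ω ∧
    ((∀ p ∈ ω, f p ≠ 0) → IsClassI (fun p => (f p)⁻¹) ω) :=
  ⟨fun p hp => (Quaternion.commute_of_commute_of_im_ne_zero (hIm p hp) (hf.2.1 p hp)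
      (hg.2.1 p hp)).eq,
    hf.mul hω hg, hf.add hω hg, hf.inv hω⟩

end
end

section
/- Let f and g both be of Class II on an open set ω ⊆ ℍ with ω ∩ ℝ = ∅. Then f(p)g(p) = g(p)f(p) for all p ∈ ω, the product fg and the sum f + g are of Class II on ω, and if f(p) ≠ 0 for all p ∈ ω then the pointwise quaternionic inverse p ↦ f(p)⁻¹ is of Class II on ω. -/
open Quaternion

noncomputable section

/-!
On `ω` write `f q = φ_q (h q)`, where `h = u + v i : ω → ℂ` and `φ_q : ℂ →ₐ[ℝ] ℍ` sends `i` to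
`ι(q)`. By the Leibniz rule `∂̄f(p) = ∂̄(φ_p ∘ h)(p) + v(p) ∂̄ι(p)`, and applying `∂̄` to
`Im q = r(q) ι(q)` gives `-3 = ι(p)² + r(p) ∂̄ι(p)`, i.e. `∂̄ι = -2/r`. Hence `f` is of Class II
exactly when `∂̄(φ_p ∘ h)(p) = 0` on `ω`, the slice being frozen at `p` before differentiating.
As `φ_p` is an algebra map out of a commutative algebra, `h ↦ ∂̄(φ_p ∘ h)(p)` satisfies
`∂̄(φ_p ∘ h₁h₂) = ∂̄(φ_p ∘ h₁) φ_p(h₂) + ∂̄(φ_p ∘ h₂) φ_p(h₁)`, so its kernel is closed under sums,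
products and inverses, which are the same operations on `h`. Pointwise commutativity holds because
the values of `f` and `g` at `q` lie in the commutative slice `φ_q(ℂ)`.
-/

open scoped RealInnerProductSpace Topology

lemma coe_eq_smul_one (r : ℝ) : (r : ℍ[ℝ]) = r • (1 : ℍ[ℝ]) := by
  rw [← Quaternion.coe_mul_eq_smul, mul_one]

lemma ContDiffOn.inv' {𝕜 E R : Type*} [NontriviallyNormedField 𝕜] [NormedAddCommGroup E]
    [NormedSpace 𝕜 E] [NormedDivisionRing R] [NormedAlgebra 𝕜 R] [CompleteSpace R]
    {n : WithTop ℕ∞} {f : E → R} {s : Set E} (hf : ContDiffOn 𝕜 n f s) (h0 : ∀ x ∈ s, f x ≠ 0) :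
    ContDiffOn 𝕜 n (fun x => (f x)⁻¹) s :=
  fun x hx => by
    simpa only [Function.comp_def, Ring.inverse_eq_inv'] using
      (contDiffAt_ringInverse 𝕜 (Units.mk0 (f x) (h0 x hx))).comp_contDiffWithinAt x (hf x hx)

def imCLM : ℍ[ℝ] →L[ℝ] ℍ[ℝ] where
  toFun := Quaternion.im
  map_add' _ _ := by simp
  map_smul' _ _ := by simp
  cont := Quaternion.continuous_im

@[simp] lemma imCLM_apply (q : ℍ[ℝ]) : imCLM q = q.im := rfl

def reCLM : ℍ[ℝ] →L[ℝ] ℝ where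
  toFun := QuaternionAlgebra.re
  map_add' _ _ := by simp
  map_smul' _ _ := by simp
  cont := Quaternion.continuous_re

lemma norm_im_smul_iota (q : ℍ[ℝ]) : ‖q.im‖ • iota q = q.im := by
  by_cases hq : q.im = 0
  · simp [iota, hq]
  · rw [iota, smul_smul, mul_inv_cancel₀ (norm_ne_zero_iff.mpr hq), one_smul]

lemma iota_mul_self {q : ℍ[ℝ]} (hq : q.im ≠ 0) : iota q * iota q = -1 := by
  have hr : ‖q.im‖ ≠ 0 := norm_ne_zero_iff.mpr hq
  have him : q.im * q.im = -((‖q.im‖ ^ 2 : ℝ) : ℍ[ℝ]) := by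
    rw [← sq, Quaternion.im_sq, Quaternion.normSq_eq_norm_mul_self, ← sq]
  rw [iota, smul_mul_smul_comm, him, smul_neg, Quaternion.smul_coe,
    show ‖q.im‖⁻¹ * ‖q.im‖⁻¹ * ‖q.im‖ ^ 2 = 1 by field_simp, Quaternion.coe_one]

lemma hasFDerivAt_norm_im {p : ℍ[ℝ]} (hp : p.im ≠ 0) :
    HasFDerivAt (fun q : ℍ[ℝ] => ‖q.im‖) (‖p.im‖⁻¹ • (innerSL ℝ p.im).comp imCLM) p := by
  have hsq : HasFDerivAt (fun q : ℍ[ℝ] => ‖q.im‖ ^ 2) (2 • (innerSL ℝ p.im).comp imCLM) p :=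
    imCLM.hasFDerivAt.norm_sq
  have hsqrt :=
    (Real.hasDerivAt_sqrt (pow_ne_zero 2 (norm_ne_zero_iff.mpr hp))).comp_hasFDerivAt p hsq
  simp only [Function.comp_def, Real.sqrt_sq (norm_nonneg _)] at hsqrt
  refine hsqrt.congr_fderiv ?_
  ext e
  simp only [smul_apply, nsmul_eq_mul, Nat.cast_ofNat, smul_eq_mul]
  field_simp

lemma differentiableAt_iota {p : ℍ[ℝ]} (hp : p.im ≠ 0) : DifferentiableAt ℝ iota p :=
  ((hasFDerivAt_norm_im hp).differentiableAt.inv (norm_ne_zero_iff.mpr hp)).smul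
    imCLM.differentiableAt

lemma Filter.EventuallyEq.fueterL_eq {f g : ℍ[ℝ] → ℍ[ℝ]} {p : ℍ[ℝ]} (h : f =ᶠ[𝓝 p] g) :
    fueterL f p = fueterL g p := by
  simp only [fueterL, h.fderiv_eq]

lemma fueterL_add {f g : ℍ[ℝ] → ℍ[ℝ]} {p : ℍ[ℝ]} (hf : DifferentiableAt ℝ f p)
    (hg : DifferentiableAt ℝ g p) :
    fueterL (fun q => f q + g q) p = fueterL f p + fueterL g p := by
  simp only [fueterL, fderiv_fun_add hf hg, add_apply, mul_add]
  abel

lemma fueterL_smul {b : ℍ[ℝ] → ℝ} {c : ℍ[ℝ] → ℍ[ℝ]} {p : ℍ[ℝ]} (hb : DifferentiableAt ℝ b p)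
    (hc : DifferentiableAt ℝ c p) :
    fueterL (fun q => b q • c q) p = fueterL (fun q => b q • c p) p + b p • fueterL c p := by
  simp only [fueterL, fderiv_fun_smul hb hc, fderiv_smul_const hb, add_apply,
    smul_apply, ContinuousLinearMap.smulRight_apply, mul_add, mul_smul_comm,
    smul_add]
  abel

lemma fueterL_smul_const {b : ℍ[ℝ] → ℝ} {p : ℍ[ℝ]} (hb : DifferentiableAt ℝ b p) (c : ℍ[ℝ]) :
    fueterL (fun q => b q • c) p = fueterL (fun q => (b q : ℍ[ℝ])) p * c := by
  simp only [coe_eq_smul_one, fueterL, fderiv_smul_const hb, ContinuousLinearMap.smulRight_apply,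
    add_mul, mul_assoc, smul_mul_assoc, one_mul]

lemma fueterL_im (p : ℍ[ℝ]) : fueterL (fun q => q.im) p = ((-3 : ℝ) : ℍ[ℝ]) := by
  rw [fueterL, show (fun q : ℍ[ℝ] => q.im) = imCLM from rfl, imCLM.fderiv]
  ext <;> simp [Quaternion.re_mul, Quaternion.imI_mul, Quaternion.imJ_mul, Quaternion.imK_mul] <;>
    norm_num [qI, qJ, qK]

lemma fueterL_coe_norm_im {p : ℍ[ℝ]} (hp : p.im ≠ 0) :
    fueterL (fun q => (‖q.im‖ : ℍ[ℝ])) p = iota p := by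
  have hd : HasFDerivAt (fun q => (‖q.im‖ : ℍ[ℝ]))
      ((‖p.im‖⁻¹ • (innerSL ℝ p.im).comp imCLM).smulRight (1 : ℍ[ℝ])) p := by
    simpa only [coe_eq_smul_one] using (hasFDerivAt_norm_im hp).smul_const (1 : ℍ[ℝ])
  rw [fueterL, hd.fderiv, iota]
  ext <;> simp [Quaternion.re_mul, Quaternion.inner_def] <;> simp [qI, qJ, qK]

lemma fueterL_iota {p : ℍ[ℝ]} (hp : p.im ≠ 0) : fueterL iota p = ((-2 / ‖p.im‖ : ℝ) : ℍ[ℝ]) := by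
  have hr : ‖p.im‖ ≠ 0 := norm_ne_zero_iff.mpr hp
  have key : fueterL (fun q => ‖q.im‖ • iota q) p = ((-3 : ℝ) : ℍ[ℝ]) := by
    simpa only [norm_im_smul_iota] using fueterL_im p
  rw [fueterL_smul (hasFDerivAt_norm_im hp).differentiableAt (differentiableAt_iota hp),
    fueterL_smul_const (hasFDerivAt_norm_im hp).differentiableAt, fueterL_coe_norm_im hp,
    iota_mul_self hp] at key
  apply smul_right_injective ℍ[ℝ] hr
  dsimp only
  rw [Quaternion.smul_coe, mul_div_cancel₀ _ hr, eq_sub_of_add_eq' key, ← Quaternion.coe_one,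
    ← Quaternion.coe_neg, ← Quaternion.coe_sub]
  norm_num

def toSlice (x : ℍ[ℝ]) (z : ℂ) : ℍ[ℝ] := (z.re : ℍ[ℝ]) + z.im • x

lemma toSlice_eq_liftAux {x : ℍ[ℝ]} (hx : x * x = -1) : toSlice x = Complex.liftAux x hx := by
  funext z
  rw [Complex.liftAux_apply, toSlice, Quaternion.algebraMap_def]

@[simp] lemma toSlice_zero (x : ℍ[ℝ]) : toSlice x 0 = 0 := by simp [toSlice]

lemma toSlice_add (x : ℍ[ℝ]) (z w : ℂ) : toSlice x (z + w) = toSlice x z + toSlice x w := by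
  simp only [toSlice, Complex.add_re, Complex.add_im, Quaternion.coe_add, add_smul]
  abel

lemma toSlice_mul {x : ℍ[ℝ]} (hx : x * x = -1) (z w : ℂ) :
    toSlice x (z * w) = toSlice x z * toSlice x w := by
  rw [toSlice_eq_liftAux hx, map_mul]

lemma toSlice_inv {x : ℍ[ℝ]} (hx : x * x = -1) (z : ℂ) : toSlice x z⁻¹ = (toSlice x z)⁻¹ := by
  rw [toSlice_eq_liftAux hx, map_inv₀]

lemma differentiableAt_toSlice_comp (x : ℍ[ℝ]) {h : ℍ[ℝ] → ℂ} {p : ℍ[ℝ]}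
    (hh : DifferentiableAt ℝ h p) : DifferentiableAt ℝ (fun q => toSlice x (h q)) p := by
  simp only [toSlice, coe_eq_smul_one]
  fun_prop

section AlgHom

variable (φ : ℂ →ₐ[ℝ] ℍ[ℝ]) {h h₁ h₂ : ℍ[ℝ] → ℂ} {p : ℍ[ℝ]}

lemma fderiv_algHom_comp (hh : DifferentiableAt ℝ h p) (e : ℍ[ℝ]) :
    fderiv ℝ (fun q => φ (h q)) p e = φ (fderiv ℝ h p e) := by
  let φL : ℂ →L[ℝ] ℍ[ℝ] := LinearMap.toContinuousLinearMap φ.toLinearMap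
  rw [show (fun q => φ (h q)) = φL ∘ h from rfl, (φL.hasFDerivAt.comp p hh.hasFDerivAt).fderiv]
  rfl

lemma fueterL_algHom_comp_mul (hh₁ : DifferentiableAt ℝ h₁ p) (hh₂ : DifferentiableAt ℝ h₂ p) :
    fueterL (fun q => φ (h₁ q * h₂ q)) p =
      fueterL (fun q => φ (h₁ q)) p * φ (h₂ p) + fueterL (fun q => φ (h₂ q)) p * φ (h₁ p) := by
  have hmul := fderiv_algHom_comp φ (hh₁.mul hh₂)
  simp only [fderiv_mul hh₁ hh₂, add_apply, smul_apply, smul_eq_mul, map_add, map_mul] at hmul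
  simp only [fueterL, Pi.mul_apply] at hmul ⊢
  have hcomm (z w : ℂ) : φ z * φ w = φ w * φ z := by rw [← map_mul, mul_comm, map_mul]
  simp only [hmul, fderiv_algHom_comp φ hh₁, fderiv_algHom_comp φ hh₂, hcomm (h₁ p),
    hcomm (h₂ p), mul_add, add_mul, mul_assoc]
  abel

lemma fueterL_algHom_comp_inv (hh : DifferentiableAt ℝ h p) (h0 : h p ≠ 0) :
    fueterL (fun q => φ (h q)⁻¹) p = -(fueterL (fun q => φ (h q)) p * φ (h p)⁻¹ ^ 2) := by
  have hinv : DifferentiableAt ℝ (fun q => (h q)⁻¹) p := hh.fun_inv h0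
  have hone : fueterL (fun q => φ (h q * (h q)⁻¹)) p = 0 := by
    have hev : (fun q => φ (h q * (h q)⁻¹)) =ᶠ[𝓝 p] fun _ => 1 :=
      (hh.continuousAt.eventually_ne h0).mono fun q hq => by simp [mul_inv_cancel₀ hq]
    rw [hev.fueterL_eq]
    simp [fueterL]
  rw [fueterL_algHom_comp_mul φ hh hinv, add_eq_zero_iff_neg_eq] at hone
  calc fueterL (fun q => φ (h q)⁻¹) p
      = fueterL (fun q => φ (h q)⁻¹) p * φ (h p) * φ (h p)⁻¹ := by
        rw [mul_assoc, ← map_mul, mul_inv_cancel₀ h0, map_one, mul_one]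
    _ = _ := by rw [← hone, sq, neg_mul, mul_assoc]

end AlgHom

lemma fueterL_toSlice_iota {h : ℍ[ℝ] → ℂ} {p : ℍ[ℝ]} (hp : p.im ≠ 0)
    (hh : DifferentiableAt ℝ h p) :
    fueterL (fun q => toSlice (iota q) (h q)) p =
      fueterL (fun q => toSlice (iota p) (h q)) p + ((-2 * (h p).im / ‖p.im‖ : ℝ) : ℍ[ℝ]) := by
  have him : DifferentiableAt ℝ (fun q => (h q).im) p := by fun_prop
  have hre : DifferentiableAt ℝ (fun q => ((h q).re : ℍ[ℝ])) p := by
    have : DifferentiableAt ℝ (fun q => (h q).re) p := by fun_prop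
    simpa only [coe_eq_smul_one] using this.smul_const (1 : ℍ[ℝ])
  simp only [toSlice]
  rw [fueterL_add hre (him.fun_smul (differentiableAt_iota hp)),
    fueterL_add hre (him.smul_const _), fueterL_smul him (differentiableAt_iota hp),
    fueterL_iota hp, Quaternion.smul_coe, add_assoc]
  congr 3
  ring

def sliceCoord (f : ℍ[ℝ] → ℍ[ℝ]) (q : ℍ[ℝ]) : ℂ := ⟨(f q).re, -(f q * iota q).re⟩

lemma sliceCoord_of_eq {f : ℍ[ℝ] → ℍ[ℝ]} {q : ℍ[ℝ]} {u v : ℝ} (hq : q.im ≠ 0)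
    (hf : f q = (u : ℍ[ℝ]) + (v : ℍ[ℝ]) * iota q) : sliceCoord f q = ⟨u, v⟩ := by
  have hre : (iota q).re = 0 := by simp [iota]
  rw [sliceCoord, hf, add_mul, mul_assoc, iota_mul_self hq]
  refine Complex.ext ?_ ?_ <;> simp [Quaternion.coe_mul_eq_smul, hre]

lemma differentiableAt_sliceCoord {f : ℍ[ℝ] → ℍ[ℝ]} {q : ℍ[ℝ]} (hq : q.im ≠ 0)
    (hf : DifferentiableAt ℝ f q) : DifferentiableAt ℝ (sliceCoord f) q := by
  have hfι : DifferentiableAt ℝ (fun q => f q * iota q) q := hf.mul (differentiableAt_iota hq)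
  have hre : DifferentiableAt ℝ (fun q => (f q).re) q := reCLM.differentiableAt.comp q hf
  have hreι : DifferentiableAt ℝ (fun q => (f q * iota q).re) q := reCLM.differentiableAt.comp q hfι
  unfold sliceCoord
  simp only [Complex.mk_eq_add_mul_I]
  fun_prop

structure IsClassIIWithCoord (f : ℍ[ℝ] → ℍ[ℝ]) (h : ℍ[ℝ] → ℂ) (ω : Set ℍ[ℝ]) : Prop where
  contDiffOn : ContDiffOn ℝ 1 f ω
  eq_toSlice : ∀ q ∈ ω, f q = toSlice (iota q) (h q)
  differentiableAt : ∀ p ∈ ω, DifferentiableAt ℝ h p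
  fueterL_toSlice : ∀ p ∈ ω, fueterL (fun q => toSlice (iota p) (h q)) p = 0

section ClassII

variable {ω : Set ℍ[ℝ]} {f : ℍ[ℝ] → ℍ[ℝ]} {h : ℍ[ℝ] → ℂ}

lemma IsClassII.exists_isClassIIWithCoord (hω : IsOpen ω) (hIm : ∀ p ∈ ω, p.im ≠ 0)
    (hf : IsClassII f ω) : ∃ h, IsClassIIWithCoord f h ω := by
  obtain ⟨u, v, hC, hdecomp, hfueter⟩ := hf
  have hcoord : ∀ q ∈ ω, sliceCoord f q = ⟨u q, v q⟩ :=
    fun q hq => sliceCoord_of_eq (hIm q hq) (hdecomp q hq)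
  have heq : ∀ q ∈ ω, f q = toSlice (iota q) (sliceCoord f q) := fun q hq => by
    rw [hcoord q hq, toSlice, hdecomp q hq, Quaternion.coe_mul_eq_smul]
  have hdiff : ∀ p ∈ ω, DifferentiableAt ℝ (sliceCoord f) p := fun p hp =>
    differentiableAt_sliceCoord (hIm p hp)
      ((hC.differentiableOn one_ne_zero).differentiableAt (hω.mem_nhds hp))
  refine ⟨sliceCoord f, hC, heq, hdiff, fun p hp => ?_⟩
  have hev : f =ᶠ[𝓝 p] fun q => toSlice (iota q) (sliceCoord f q) :=
    Filter.eventually_of_mem (hω.mem_nhds hp) heq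
  have := hfueter p hp
  rw [hev.fueterL_eq, fueterL_toSlice_iota (hIm p hp) (hdiff p hp), hcoord p hp] at this
  exact add_eq_right.mp this

lemma IsClassIIWithCoord.isClassII (hω : IsOpen ω) (hIm : ∀ p ∈ ω, p.im ≠ 0)
    (hf : IsClassIIWithCoord f h ω) : IsClassII f ω := by
  refine ⟨fun q => (h q).re, fun q => (h q).im, hf.contDiffOn, fun q hq => ?_, fun p hp => ?_⟩
  · rw [hf.eq_toSlice q hq, toSlice, Quaternion.coe_mul_eq_smul]
  · have hev : f =ᶠ[𝓝 p] fun q => toSlice (iota q) (h q) :=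
      Filter.eventually_of_mem (hω.mem_nhds hp) hf.eq_toSlice
    rw [hev.fueterL_eq, fueterL_toSlice_iota (hIm p hp) (hf.differentiableAt p hp),
      hf.fueterL_toSlice p hp, zero_add]

end ClassII

namespace IsClassIIWithCoord

variable {ω : Set ℍ[ℝ]} {f g : ℍ[ℝ] → ℍ[ℝ]} {h h₁ h₂ : ℍ[ℝ] → ℂ}

lemma mul_comm (hIm : ∀ p ∈ ω, p.im ≠ 0) (hf : IsClassIIWithCoord f h₁ ω)
    (hg : IsClassIIWithCoord g h₂ ω) : ∀ q ∈ ω, f q * g q = g q * f q := fun q hq => by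
  rw [hf.eq_toSlice q hq, hg.eq_toSlice q hq, ← toSlice_mul (iota_mul_self (hIm q hq)),
    ← toSlice_mul (iota_mul_self (hIm q hq)), _root_.mul_comm]

lemma add (hf : IsClassIIWithCoord f h₁ ω) (hg : IsClassIIWithCoord g h₂ ω) :
    IsClassIIWithCoord (fun q => f q + g q) (fun q => h₁ q + h₂ q) ω where
  contDiffOn := hf.contDiffOn.add hg.contDiffOn
  eq_toSlice q hq := by rw [toSlice_add, hf.eq_toSlice q hq, hg.eq_toSlice q hq]
  differentiableAt p hp := (hf.differentiableAt p hp).add (hg.differentiableAt p hp)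
  fueterL_toSlice p hp := by
    simp only [toSlice_add]
    rw [fueterL_add (differentiableAt_toSlice_comp _ (hf.differentiableAt p hp))
      (differentiableAt_toSlice_comp _ (hg.differentiableAt p hp)), hf.fueterL_toSlice p hp,
      hg.fueterL_toSlice p hp, add_zero]

lemma mul (hIm : ∀ p ∈ ω, p.im ≠ 0) (hf : IsClassIIWithCoord f h₁ ω)
    (hg : IsClassIIWithCoord g h₂ ω) :
    IsClassIIWithCoord (fun q => f q * g q) (fun q => h₁ q * h₂ q) ω where
  contDiffOn := hf.contDiffOn.mul hg.contDiffOn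
  eq_toSlice q hq := by
    rw [toSlice_mul (iota_mul_self (hIm q hq)), hf.eq_toSlice q hq, hg.eq_toSlice q hq]
  differentiableAt p hp := (hf.differentiableAt p hp).mul (hg.differentiableAt p hp)
  fueterL_toSlice p hp := by
    have hf0 := hf.fueterL_toSlice p hp
    have hg0 := hg.fueterL_toSlice p hp
    rw [toSlice_eq_liftAux (iota_mul_self (hIm p hp))] at hf0 hg0 ⊢
    rw [fueterL_algHom_comp_mul _ (hf.differentiableAt p hp) (hg.differentiableAt p hp), hf0, hg0,
      zero_mul, zero_mul, add_zero]

lemma inv (hIm : ∀ p ∈ ω, p.im ≠ 0) (hf : IsClassIIWithCoord f h ω) (hne : ∀ q ∈ ω, f q ≠ 0) :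
    IsClassIIWithCoord (fun q => (f q)⁻¹) (fun q => (h q)⁻¹) ω := by
  have hh0 : ∀ q ∈ ω, h q ≠ 0 := fun q hq h0 =>
    hne q hq (by rw [hf.eq_toSlice q hq, h0, toSlice_zero])
  refine ⟨hf.contDiffOn.inv' hne, fun q hq => ?_, fun p hp => ?_, fun p hp => ?_⟩
  · rw [toSlice_inv (iota_mul_self (hIm q hq)), hf.eq_toSlice q hq]
  · exact (hf.differentiableAt p hp).inv (hh0 p hp)
  · have hf0 := hf.fueterL_toSlice p hp
    rw [toSlice_eq_liftAux (iota_mul_self (hIm p hp))] at hf0 ⊢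
    rw [fueterL_algHom_comp_inv _ (hf.differentiableAt p hp) (hh0 p hp), hf0, zero_mul, neg_zero]

end IsClassIIWithCoord

/-- Class II functions commute and are closed under product, sum
and pointwise inverse. -/
theorem stmt4 (ω : Set ℍ[ℝ]) (hω : IsOpen ω) (hIm : ∀ p ∈ ω, p.im ≠ 0)
    (f g : ℍ[ℝ] → ℍ[ℝ]) (hf : IsClassII f ω) (hg : IsClassII g ω) :
    (∀ p ∈ ω, f p * g p = g p * f p) ∧
    IsClassII (fun p => f p * g p) ω ∧
    IsClassII (fun p => f p + g p) ω ∧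
    ((∀ p ∈ ω, f p ≠ 0) → IsClassII (fun p => (f p)⁻¹) ω) := by
  obtain ⟨h₁, hF⟩ := hf.exists_isClassIIWithCoord hω hIm
  obtain ⟨h₂, hG⟩ := hg.exists_isClassIIWithCoord hω hIm
  exact ⟨hF.mul_comm hIm hG, (hF.mul hIm hG).isClassII hω hIm, (hF.add hG).isClassII hω hIm,
    fun hne => (hF.inv hIm hne).isClassII hω hIm⟩

end
end

section
/- Let f = u + iv be holomorphic on an open subset Ω of the upper half plane {x + iy ∈ ℂ : y > 0}, and define L(f)(z) = (i/y)·f'(z) − i·v(z)/y² for z = x + iy ∈ Ω, where f' is the complex derivative of f. Then L(f) satisfies the Rinehart condition ∂(Lf)/∂x + i·∂(Lf)/∂y = 2·Im(L(f)(z))/y at every point z = x + iy ∈ Ω. -/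
/-!
The Cauchy–Riemann operator `D = ∂/∂x + i ∂/∂y` is a derivation that kills holomorphic
functions and satisfies `D (y ^ n) = n y ^ (n - 1) i` and `D (Im f) = i · conj f'`.
Writing `L f = i (f' y⁻¹ - v y⁻²)` gives
`D (L f) = (f' + conj f') / y² - 2 v / y³ = 2 (Re f' / y - v / y²) / y`,
and `Re f' / y - v / y²` is exactly `Im (L f)`.
-/

open Quaternion

noncomputable section

/-- The functional `L(f)(z) = (i/y) f'(z) - i v(z)/y²`. -/
def Lop (f : ℂ → ℂ) (w : ℂ) : ℂ :=
  Complex.I / (w.im : ℂ) * deriv f w - Complex.I * ((f w).im : ℂ) / (w.im : ℂ) ^ 2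

open Complex ComplexConjugate

def cauchyRiemannOp (g : ℂ → ℂ) (z : ℂ) : ℂ :=
  fderiv ℝ g z 1 + I * fderiv ℝ g z I

section
variable {g h F : ℂ → ℂ} {z : ℂ}

theorem cauchyRiemannOp_comp (hF : DifferentiableAt ℂ F (g z)) (hg : DifferentiableAt ℝ g z) :
    cauchyRiemannOp (F ∘ g) z = deriv F (g z) * cauchyRiemannOp g z := by
  rw [cauchyRiemannOp, cauchyRiemannOp, fderiv_comp z (hF.restrictScalars ℝ) hg,
    hF.fderiv_restrictScalars ℝ]
  simp only [ContinuousLinearMap.comp_apply, ContinuousLinearMap.coe_restrictScalars',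
    fderiv_eq_smul_deriv, smul_eq_mul]
  ring

theorem cauchyRiemannOp_id : cauchyRiemannOp id z = 0 := by
  simp [cauchyRiemannOp]

theorem cauchyRiemannOp_eq_zero_of_differentiableAt (hg : DifferentiableAt ℂ g z) :
    cauchyRiemannOp g z = 0 := by
  simpa [cauchyRiemannOp_id] using cauchyRiemannOp_comp (g := id) hg differentiableAt_id

theorem cauchyRiemannOp_mul (hg : DifferentiableAt ℝ g z) (hh : DifferentiableAt ℝ h z) :
    cauchyRiemannOp (fun w => g w * h w) z =
      g z * cauchyRiemannOp h z + h z * cauchyRiemannOp g z := by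
  simp only [cauchyRiemannOp, fderiv_fun_mul hg hh, add_apply, smul_apply, smul_eq_mul]
  ring

theorem cauchyRiemannOp_sub (hg : DifferentiableAt ℝ g z) (hh : DifferentiableAt ℝ h z) :
    cauchyRiemannOp (fun w => g w - h w) z = cauchyRiemannOp g z - cauchyRiemannOp h z := by
  simp only [cauchyRiemannOp, fderiv_fun_sub hg hh, sub_apply]
  ring

theorem cauchyRiemannOp_const_mul (hg : DifferentiableAt ℝ g z) (c : ℂ) :
    cauchyRiemannOp (fun w => c * g w) z = c * cauchyRiemannOp g z := by
  simp only [cauchyRiemannOp, fderiv_const_mul hg, smul_apply, smul_eq_mul]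
  ring

theorem cauchyRiemannOp_ofReal_im_comp (hg : DifferentiableAt ℂ g z) :
    cauchyRiemannOp (fun w => ((g w).im : ℂ)) z = I * conj (deriv g z) := by
  have : HasFDerivAt (fun w => ((g w).im : ℂ))
      ((ofRealCLM.comp imCLM).comp ((fderiv ℂ g z).restrictScalars ℝ)) z :=
    (ofRealCLM.comp imCLM).hasFDerivAt.comp z (hg.hasFDerivAt.restrictScalars ℝ)
  apply Complex.ext <;> simp [cauchyRiemannOp, this.fderiv, fderiv_eq_smul_deriv]

theorem cauchyRiemannOp_ofReal_im : cauchyRiemannOp (fun w => (w.im : ℂ)) z = I := by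
  simpa using cauchyRiemannOp_ofReal_im_comp (g := id) (z := z) differentiableAt_id

theorem differentiableAt_ofReal_im_zpow (hz : z.im ≠ 0) (n : ℤ) :
    DifferentiableAt ℝ (fun w : ℂ => (w.im : ℂ) ^ n) z :=
  ((differentiableAt_zpow.2 (Or.inl (ofReal_ne_zero.2 hz))).restrictScalars ℝ).comp
    (f := fun w : ℂ => (w.im : ℂ)) z (ofRealCLM.comp imCLM).differentiableAt

theorem cauchyRiemannOp_ofReal_im_zpow (hz : z.im ≠ 0) (n : ℤ) :
    cauchyRiemannOp (fun w => (w.im : ℂ) ^ n) z = n * (z.im : ℂ) ^ (n - 1) * I := by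
  have hF : DifferentiableAt ℂ (fun c : ℂ => c ^ n) (z.im : ℂ) :=
    differentiableAt_zpow.2 (Or.inl (ofReal_ne_zero.2 hz))
  have hIm : DifferentiableAt ℝ (fun w : ℂ => (w.im : ℂ)) z :=
    (ofRealCLM.comp imCLM).differentiableAt
  have := cauchyRiemannOp_comp hF hIm
  simp only [Function.comp_def, deriv_zpow, cauchyRiemannOp_ofReal_im] at this
  rw [this]
end

theorem Lop_eq_zpow (f : ℂ → ℂ) : Lop f = fun w =>
    I * (deriv f w * (w.im : ℂ) ^ (-1 : ℤ)) - I * (((f w).im : ℂ) * (w.im : ℂ) ^ (-2 : ℤ)) := by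
  funext w
  simp only [Lop, zpow_neg, zpow_ofNat]
  ring

theorem Lop_im (f : ℂ → ℂ) (w : ℂ) :
    (Lop f w).im = (deriv f w).re / w.im - (f w).im / w.im ^ 2 := by
  simp [Lop, ← ofReal_pow, div_re, div_im, normSq_ofReal]
  field_simp

theorem cauchyRiemannOp_Lop {f : ℂ → ℂ} {z : ℂ} (hf : DifferentiableAt ℂ f z)
    (hf' : DifferentiableAt ℂ (deriv f) z) (hz : z.im ≠ 0) :
    cauchyRiemannOp (Lop f) z =
      (deriv f z + conj (deriv f z)) / (z.im : ℂ) ^ 2 - 2 * (f z).im / (z.im : ℂ) ^ 3 := by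
  have hv : DifferentiableAt ℝ (fun w => ((f w).im : ℂ)) z :=
    (ofRealCLM.comp imCLM).differentiableAt.comp z (hf.restrictScalars ℝ)
  have hf'R := hf'.restrictScalars ℝ
  have hzpow := differentiableAt_ofReal_im_zpow hz
  rw [Lop_eq_zpow, cauchyRiemannOp_sub (by fun_prop) (by fun_prop),
    cauchyRiemannOp_const_mul (by fun_prop), cauchyRiemannOp_const_mul (by fun_prop),
    cauchyRiemannOp_mul hf'R (hzpow _), cauchyRiemannOp_mul hv (hzpow _),
    cauchyRiemannOp_eq_zero_of_differentiableAt hf', cauchyRiemannOp_ofReal_im_comp hf,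
    cauchyRiemannOp_ofReal_im_zpow hz, cauchyRiemannOp_ofReal_im_zpow hz]
  norm_num [zpow_neg]
  linear_combination (2 * (f z).im / (z.im : ℂ) ^ 3
    - (deriv f z + conj (deriv f z)) / (z.im : ℂ) ^ 2) * I_sq

/-- `L(f)` satisfies the Rinehart condition for holomorphic `f`. -/
theorem stmt16 (Ω : Set ℂ) (hΩ : IsOpen Ω) (hup : ∀ z ∈ Ω, 0 < z.im)
    (f : ℂ → ℂ) (hf : DifferentiableOn ℂ f Ω) :
    ∀ z ∈ Ω,
      fderiv ℝ (Lop f) z 1 + Complex.I * fderiv ℝ (Lop f) z Complex.I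
        = ((2 * (Lop f z).im / z.im : ℝ) : ℂ) := by
  intro z hz
  have hy : z.im ≠ 0 := (hup z hz).ne'
  have hfz : DifferentiableAt ℂ f z := hf.differentiableAt (hΩ.mem_nhds hz)
  have hf'z : DifferentiableAt ℂ (deriv f) z := (hf.deriv hΩ).differentiableAt (hΩ.mem_nhds hz)
  change cauchyRiemannOp (Lop f) z = _
  rw [cauchyRiemannOp_Lop hfz hf'z hy, Lop_im, add_conj]
  push_cast
  field_simp

end
end
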